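/- Let q ∈ ℕ with q ≥ 1 and let τ ∈ ℝ satisfy 0 ≤ τ ≤ q − 1. Then Σ_{k=q}^{∞} 2·(τ/2)^k / k! ≤ 4·τ^q / (2^q · q!). In particular, combined with |J_k(τ)| ≤ (τ/2)^k/k!, one gets Σ_{k=q}^{∞} 2·|J_k(τ)| ≤ 4·τ^q/(2^q·q!). -/

import Mathlib

open Real

/-- The Bessel function of the first kind of (natural) order `k`. -/
noncomputable def besselJ (k : ℕ) (τ : ℝ) : ℝ :=
  ∑' m : ℕ, (-1 : ℝ) ^ m * (τ / 2) ^ (2 * m + k) /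
    ((m.factorial : ℝ) * ((m + k).factorial : ℝ))

/-!
The Poisson integral `∫₀^π cos (x cos θ) sin^{2n} θ dθ = c_n J_n(x) / (x/2)^n`, obtained by
integrating the cosine series termwise against the beta integrals
`∫₀^π cos^{2m} θ sin^{2n} θ dθ`, gives `|J_n(x)| ≤ |x/2|^n / n!`, since `|cos| ≤ 1` and the
case `x = 0` identifies the constant.
For `τ ≤ q + 1` the terms `(τ/2)^k / k!` with `k ≥ q` decay at least geometrically with ratio
`1/2`, so their tail sum is at most twice its first term.
-/

open scoped Nat
open Finset intervalIntegral

lemma prod_range_odd_div_even (n : ℕ) :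
    ∏ i ∈ range n, ((2 * (i : ℝ) + 1) / (2 * i + 2)) =
      (2 * n)! / (4 ^ n * (n ! : ℝ) ^ 2) := by
  induction n with
  | zero => simp
  | succ n ih =>
    rw [prod_range_succ, ih, show 2 * (n + 1) = 2 * n + 1 + 1 by ring]
    push_cast [Nat.factorial_succ]
    field_simp
    ring

lemma integral_cos_pow_even_mul_sin_pow_even (m n : ℕ) :
    ∫ θ in (0)..π, cos θ ^ (2 * m) * sin θ ^ (2 * n) =
      π * (2 * m)! * (2 * n)! / (4 ^ (m + n) * m ! * n ! * (m + n)!) := by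
  induction m generalizing n with
  | zero =>
    simp only [mul_zero, pow_zero, one_mul, zero_add, Nat.factorial_zero, Nat.cast_one,
      integral_sin_pow_even, prod_range_odd_div_even]
    field_simp
  | succ m ih =>
    have cos_sq_eq (θ : ℝ) : cos θ ^ (2 * (m + 1)) * sin θ ^ (2 * n) =
        cos θ ^ (2 * m) * sin θ ^ (2 * n) - cos θ ^ (2 * m) * sin θ ^ (2 * (n + 1)) := by
      rw [mul_add, mul_add, pow_add, pow_add, mul_one, cos_sq']
      ring
    simp_rw [cos_sq_eq]
    rw [integral_sub (by apply Continuous.intervalIntegrable; fun_prop)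
      (by apply Continuous.intervalIntegrable; fun_prop), ih, ih,
      show 2 * (m + 1) = 2 * m + 1 + 1 by ring, show 2 * (n + 1) = 2 * n + 1 + 1 by ring,
      show m + 1 + n = m + n + 1 by ring, show m + (n + 1) = m + n + 1 by ring]
    push_cast [Nat.factorial_succ]
    field_simp
    ring

/-- `J_n(x) / (x / 2) ^ n`, extended continuously to `x = 0`. -/
noncomputable def besselJReduced (n : ℕ) (x : ℝ) : ℝ :=
  ∑' m : ℕ, (-1 : ℝ) ^ m * (x / 2) ^ (2 * m) / (m ! * (m + n)!)

lemma besselJ_eq_pow_mul_besselJReduced (n : ℕ) (x : ℝ) :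
    besselJ n x = (x / 2) ^ n * besselJReduced n x := by
  rw [besselJ, besselJReduced, ← tsum_mul_left]
  congr 1 with m
  ring

lemma integral_cos_mul_cos_mul_sin_pow_even (n : ℕ) (x : ℝ) :
    ∫ θ in (0)..π, cos (x * cos θ) * sin θ ^ (2 * n) =
      π * (2 * n)! / (4 ^ n * n !) * besselJReduced n x := by
  set F : ℕ → ℝ → ℝ := fun m θ =>
    (-1) ^ m * x ^ (2 * m) / (2 * m)! * (cos θ ^ (2 * m) * sin θ ^ (2 * n))
  have hasSum_integral : HasSum (fun m => ∫ θ in (0)..π, F m θ)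
      (∫ θ in (0)..π, cos (x * cos θ) * sin θ ^ (2 * n)) := by
    refine hasSum_integral_of_dominated_convergence (fun m _ => x ^ (2 * m) / (2 * m)!)
      (fun m => by fun_prop) (fun m => .of_forall fun θ _ => ?_)
      (.of_forall fun _ _ => (Real.hasSum_cosh x).summable) intervalIntegrable_const
      (.of_forall fun θ _ => ?_)
    · have h_trig : |cos θ ^ (2 * m) * sin θ ^ (2 * n)| ≤ 1 := by
        rw [abs_mul, abs_pow, abs_pow]
        exact mul_le_one₀ (pow_le_one₀ (abs_nonneg _) (abs_cos_le_one θ)) (by positivity)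
          (pow_le_one₀ (abs_nonneg _) (abs_sin_le_one θ))
      rw [Real.norm_eq_abs, abs_mul, abs_div, abs_mul, abs_pow, abs_pow, abs_neg, abs_one,
        one_pow, one_mul, (even_two_mul m).pow_abs, Nat.abs_cast]
      have h_coeff : 0 ≤ x ^ (2 * m) / (2 * m)! :=
        div_nonneg ((even_two_mul m).pow_nonneg x) (Nat.cast_nonneg _)
      exact mul_le_of_le_one_right h_coeff h_trig
    · simpa [F, mul_pow, mul_assoc, mul_div_right_comm] using
        (Real.hasSum_cos (x * cos θ)).mul_right (sin θ ^ (2 * n))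
  have integral_term (m : ℕ) : ∫ θ in (0)..π, F m θ = π * (2 * n)! / (4 ^ n * n !) *
      ((-1) ^ m * (x / 2) ^ (2 * m) / (m ! * (m + n)!)) := by
    have four_pow : (2 : ℝ) ^ (2 * m) = 4 ^ m := by rw [pow_mul]; norm_num
    rw [integral_const_mul, integral_cos_pow_even_mul_sin_pow_even, div_pow, four_pow, pow_add]
    field_simp
  simp_rw [integral_term] at hasSum_integral
  rw [besselJReduced, ← tsum_mul_left, hasSum_integral.tsum_eq]

lemma abs_besselJReduced_le (n : ℕ) (x : ℝ) : |besselJReduced n x| ≤ (n ! : ℝ)⁻¹ := by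
  set c : ℝ := π * (2 * n)! / (4 ^ n * n !) with hc_def
  have hc : 0 < c := by positivity
  refine le_of_mul_le_mul_left ?_ hc
  calc c * |besselJReduced n x|
      = |∫ θ in (0)..π, cos (x * cos θ) * sin θ ^ (2 * n)| := by
        rw [integral_cos_mul_cos_mul_sin_pow_even, abs_mul, abs_of_pos hc]
    _ ≤ ∫ θ in (0)..π, |cos (x * cos θ) * sin θ ^ (2 * n)| :=
        abs_integral_le_integral_abs pi_nonneg
    _ ≤ ∫ θ in (0)..π, sin θ ^ (2 * n) := by
        refine integral_mono_on pi_nonneg (by apply Continuous.intervalIntegrable; fun_prop)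
          (by apply Continuous.intervalIntegrable; fun_prop) fun θ _ => ?_
        rw [abs_mul, abs_of_nonneg ((even_two_mul n).pow_nonneg (sin θ))]
        exact mul_le_of_le_one_left ((even_two_mul n).pow_nonneg _) (abs_cos_le_one _)
    _ = c * (n ! : ℝ)⁻¹ := by
        rw [integral_sin_pow_even, prod_range_odd_div_even, hc_def]
        field_simp

lemma abs_besselJ_le (n : ℕ) (x : ℝ) : |besselJ n x| ≤ |x / 2| ^ n / n ! := by
  rw [besselJ_eq_pow_mul_besselJReduced, abs_mul, abs_pow, div_eq_mul_inv]
  exact mul_le_mul_of_nonneg_left (abs_besselJReduced_le n x) (by positivity)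

lemma summable_pow_add_div_factorial_add (x : ℝ) (q : ℕ) :
    Summable fun k => x ^ (q + k) / (q + k)! := by
  simpa only [add_comm q] using (summable_nat_add_iff q).mpr (Real.summable_pow_div_factorial x)

lemma pow_add_div_factorial_add_le {x : ℝ} (hx : 0 ≤ x) {q : ℕ} (hxq : 2 * x ≤ q + 1)
    (k : ℕ) :
    x ^ (q + k) / (q + k)! ≤ x ^ q / q ! * (1 / 2) ^ k := by
  have h_factorial : (q ! : ℝ) * (q + 1) ^ k ≤ (q + k)! :=
    mod_cast Nat.factorial_mul_pow_le_factorial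
  rw [div_le_iff₀ (by positivity)]
  calc x ^ (q + k) = x ^ q / q ! * (1 / 2) ^ k * (q ! * (2 * x) ^ k) := by
        rw [mul_pow, pow_add, one_div_pow]; field_simp
    _ ≤ x ^ q / q ! * (1 / 2) ^ k * (q ! * (q + 1) ^ k) := by gcongr
    _ ≤ x ^ q / q ! * (1 / 2) ^ k * (q + k)! := by gcongr

lemma tsum_pow_add_div_factorial_add_le {x : ℝ} (hx : 0 ≤ x) {q : ℕ} (hxq : 2 * x ≤ q + 1) :
    ∑' k, x ^ (q + k) / (q + k)! ≤ 2 * (x ^ q / q !) := by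
  have h_geom : HasSum (fun k : ℕ => x ^ q / q ! * (1 / 2) ^ k) (2 * (x ^ q / q !)) := by
    simpa only [mul_comm (2 : ℝ)] using hasSum_geometric_two.mul_left (x ^ q / q !)
  exact ((summable_pow_add_div_factorial_add x q).tsum_le_tsum
    (pow_add_div_factorial_add_le hx hxq) h_geom.summable).trans_eq h_geom.tsum_eq

theorem tail_bound_general (q : ℕ) (τ : ℝ) (hτ0 : 0 ≤ τ) (hτ : τ ≤ (q : ℝ) - 1) :
    (∑' k : ℕ, 2 * (τ / 2) ^ (q + k) / ((q + k).factorial : ℝ)) ≤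
      4 * τ ^ q / (2 ^ q * (q.factorial : ℝ)) ∧
    (∑' k : ℕ, 2 * |besselJ (q + k) τ|) ≤ 4 * τ ^ q / (2 ^ q * (q.factorial : ℝ)) := by
  have hτ2 : 0 ≤ τ / 2 := by positivity
  have h_summable : Summable fun k => 2 * (τ / 2) ^ (q + k) / (q + k)! := by
    simpa only [mul_div_assoc] using (summable_pow_add_div_factorial_add (τ / 2) q).mul_left 2
  have h_exp_tail :
      ∑' k : ℕ, 2 * (τ / 2) ^ (q + k) / (q + k)! ≤ 4 * τ ^ q / (2 ^ q * q !) :=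
    calc ∑' k : ℕ, 2 * (τ / 2) ^ (q + k) / (q + k)!
        = 2 * ∑' k : ℕ, (τ / 2) ^ (q + k) / (q + k)! := by
          simp only [mul_div_assoc, tsum_mul_left]
      _ ≤ 2 * (2 * ((τ / 2) ^ q / q !)) := by
        gcongr
        exact tsum_pow_add_div_factorial_add_le hτ2 (by linarith)
      _ = 4 * τ ^ q / (2 ^ q * q !) := by rw [div_pow]; field_simp; ring
  have h_bessel (k : ℕ) : 2 * |besselJ (q + k) τ| ≤ 2 * (τ / 2) ^ (q + k) / (q + k)! := by
    rw [mul_div_assoc, ← abs_of_nonneg hτ2]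
    exact mul_le_mul_of_nonneg_left (abs_besselJ_le _ _) two_pos.le
  refine ⟨h_exp_tail, le_trans ?_ h_exp_tail⟩
  exact (h_summable.of_nonneg_of_le (fun _ => by positivity) h_bessel).tsum_le_tsum h_bessel
    h_summable

theorem tail_bound (q : ℕ) (hq : 1 ≤ q) (τ : ℝ) (hτ0 : 0 ≤ τ) (hτ : τ ≤ (q : ℝ) - 1) :
    (∑' k : ℕ, 2 * (τ / 2) ^ (q + k) / ((q + k).factorial : ℝ)) ≤
      4 * τ ^ q / (2 ^ q * (q.factorial : ℝ)) ∧
    (∑' k : ℕ, 2 * |besselJ (q + k) τ|) ≤ 4 * τ ^ q / (2 ^ q * (q.factorial : ℝ)) :=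
  tail_bound_general q τ hτ0 hτ
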